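/- arXiv:math/9901082 — 7 statements merged into one kernel-verified Lean document; each statement's English description precedes it below -/
import Mathlib

section
/- Let B1, B2 be finite crystals with levels lev B1 ≥ lev B2. Then the level of B1⊗B2 equals max(lev B1, lev B2) = lev B1, and the set of minimal elements of B1⊗B2 equals { b1⊗b2 : b1 ∈ (B1)_min and φ_i(b1) ≥ ε_i(b2) for all i }. -/
/-- for finite crystals with `lev B1 ≥ lev B2`,
`lev(B1⊗B2) = max(lev B1, lev B2)` and
`(B1⊗B2)_min = { b1⊗b2 : b1 ∈ (B1)_min, φ_i(b1) ≥ ε_i(b2) ∀i }`.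
Levels are `⟨c, ε(b)⟩ = ∑_i a_i^∨ ε_i(b)`. -/
theorem stmt5 {I B1 B2 : Type*} [Fintype I]
    (ε1 φ1 : I → B1 → ℕ) (ε2 φ2 : I → B2 → ℕ)
    (a : I → ℕ) (ha : ∀ i, 0 < a i)
    (L1 L2 : ℕ)
    -- ⟨c, ε(b)⟩ = ⟨c, φ(b)⟩
    (hc1 : ∀ b, ∑ i, a i * ε1 i b = ∑ i, a i * φ1 i b)
    (hc2 : ∀ b, ∑ i, a i * ε2 i b = ∑ i, a i * φ2 i b)
    -- L1 = lev B1, L2 = lev B2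
    (hL1min : ∀ b, L1 ≤ ∑ i, a i * ε1 i b) (hL1ex : ∃ b, ∑ i, a i * ε1 i b = L1)
    (hL2min : ∀ b, L2 ≤ ∑ i, a i * ε2 i b) (hL2ex : ∃ b, ∑ i, a i * ε2 i b = L2)
    -- condition (3) of the category 𝒞^fin for B2 (ε-version)
    (hcond2 : ∀ μ : I → ℕ, L2 ≤ ∑ i, a i * μ i → ∃ b2, ∀ i, ε2 i b2 ≤ μ i)
    (h12 : L2 ≤ L1)
    -- tensor product ε
    (εT : I → B1 × B2 → ℕ)
    (hεT : ∀ i p, εT i p = max (ε1 i p.1) (ε1 i p.1 + ε2 i p.2 - φ1 i p.1)) :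
    ((∀ p : B1 × B2, max L1 L2 ≤ ∑ i, a i * εT i p) ∧
      (∃ p : B1 × B2, ∑ i, a i * εT i p = max L1 L2)) ∧
    (∀ p : B1 × B2, (∑ i, a i * εT i p = max L1 L2) ↔
      ((∑ i, a i * ε1 i p.1 = L1) ∧ ∀ i, ε2 i p.2 ≤ φ1 i p.1)) := by
  have hmax : max L1 L2 = L1 := max_eq_left h12
  -- εT ≥ ε1 pointwise
  have hge : ∀ (p : B1 × B2) (i : I), ε1 i p.1 ≤ εT i p := by
    intro p i; rw [hεT]; exact le_max_left _ _
  have hsumge : ∀ p : B1 × B2, ∑ i, a i * ε1 i p.1 ≤ ∑ i, a i * εT i p := by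
    intro p
    exact Finset.sum_le_sum (fun i _ => Nat.mul_le_mul_left _ (hge p i))
  have hlow : ∀ p : B1 × B2, max L1 L2 ≤ ∑ i, a i * εT i p := by
    intro p; rw [hmax]
    exact le_trans (hL1min p.1) (hsumge p)
  -- if ε2 ≤ φ1 then εT = ε1
  have heq : ∀ (p : B1 × B2), (∀ i, ε2 i p.2 ≤ φ1 i p.1) →
      ∀ i, εT i p = ε1 i p.1 := by
    intro p h i
    rw [hεT]
    have : ε1 i p.1 + ε2 i p.2 - φ1 i p.1 ≤ ε1 i p.1 := by
      rw [tsub_le_iff_right]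
      exact Nat.add_le_add_left (h i) _
    exact max_eq_left this
  refine ⟨⟨hlow, ?_⟩, ?_⟩
  · obtain ⟨b1, hb1⟩ := hL1ex
    have hφ : L2 ≤ ∑ i, a i * φ1 i b1 := by
      rw [← hc1 b1, hb1]; exact h12
    obtain ⟨b2, hb2⟩ := hcond2 (fun i => φ1 i b1) hφ
    refine ⟨(b1, b2), ?_⟩
    rw [hmax, ← hb1]
    exact Finset.sum_congr rfl (fun i _ => by rw [heq (b1, b2) hb2 i])
  · intro p
    constructor
    · intro hsum
      have h1 : ∑ i, a i * ε1 i p.1 = L1 := by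
        have := hsumge p
        rw [hsum, hmax] at this
        exact le_antisymm this (hL1min p.1)
      have hsume : ∑ i, a i * εT i p = ∑ i, a i * ε1 i p.1 := by
        rw [hsum, hmax, h1]
      -- pointwise equality
      have hpt : ∀ i ∈ Finset.univ, a i * ε1 i p.1 = a i * εT i p := by
        apply (Finset.sum_eq_sum_iff_of_le
          (fun i _ => Nat.mul_le_mul_left _ (hge p i))).mp hsume.symm
      refine ⟨h1, fun i => ?_⟩
      have := hpt i (Finset.mem_univ i)
      have hεeq : εT i p = ε1 i p.1 :=
        (Nat.eq_of_mul_eq_mul_left (ha i) this).symm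
      rw [hεT] at hεeq
      by_contra hcon
      push_neg at hcon
      have : ε1 i p.1 < ε1 i p.1 + ε2 i p.2 - φ1 i p.1 := by
        omega
      omega
    · rintro ⟨h1, h2⟩
      rw [hmax, ← h1]
      exact Finset.sum_congr rfl (fun i _ => by rw [heq p h2 i])
end

section
/- Let B1, B2 be finite crystals with levels lev B1 ≤ lev B2. Then (B1⊗B2)_min = { b1⊗b2 : b2 ∈ (B2)_min and φ_i(b1) ≤ ε_i(b2) for all i }. -/
/-- for finite crystals with `lev B1 ≤ lev B2`,
`(B1⊗B2)_min = { b1⊗b2 : b2 ∈ (B2)_min, φ_i(b1) ≤ ε_i(b2) ∀i }`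
(minimal elements of `B1⊗B2` are those attaining level
`lev(B1⊗B2) = max(lev B1, lev B2)`). -/
theorem stmt6 {I B1 B2 : Type*} [Fintype I]
    (ε1 φ1 : I → B1 → ℕ) (ε2 φ2 : I → B2 → ℕ)
    (a : I → ℕ) (ha : ∀ i, 0 < a i)
    (L1 L2 : ℕ)
    (hc1 : ∀ b, ∑ i, a i * ε1 i b = ∑ i, a i * φ1 i b)
    (hc2 : ∀ b, ∑ i, a i * ε2 i b = ∑ i, a i * φ2 i b)
    (hL1min : ∀ b, L1 ≤ ∑ i, a i * ε1 i b) (hL1ex : ∃ b, ∑ i, a i * ε1 i b = L1)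
    (hL2min : ∀ b, L2 ≤ ∑ i, a i * ε2 i b) (hL2ex : ∃ b, ∑ i, a i * ε2 i b = L2)
    (h12 : L1 ≤ L2)
    (εT φT : I → B1 × B2 → ℕ)
    (hεT : ∀ i p, εT i p = max (ε1 i p.1) (ε1 i p.1 + ε2 i p.2 - φ1 i p.1))
    (hφT : ∀ i p, φT i p = max (φ2 i p.2) (φ1 i p.1 + φ2 i p.2 - ε2 i p.2)) :
    ∀ p : B1 × B2, (∑ i, a i * εT i p = max L1 L2) ↔
      ((∑ i, a i * ε2 i p.2 = L2) ∧ ∀ i, φ1 i p.1 ≤ ε2 i p.2) := by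
  intro p
  have hmax : max L1 L2 = L2 := max_eq_right h12
  have key : ∀ i, εT i p = ε1 i p.1 + (ε2 i p.2 - φ1 i p.1) := by
    intro i; rw [hεT]; omega
  have hsum : ∑ i, a i * εT i p
      = ∑ i, a i * φ1 i p.1 + ∑ i, a i * (ε2 i p.2 - φ1 i p.1) := by
    rw [← hc1 p.1, ← Finset.sum_add_distrib]
    exact Finset.sum_congr rfl fun i _ => by rw [key i, mul_add]
  have hterm : ∀ i ∈ (Finset.univ : Finset I),
      a i * ε2 i p.2 ≤ a i * φ1 i p.1 + a i * (ε2 i p.2 - φ1 i p.1) := by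
    intro i _
    have h := Nat.mul_le_mul_left (a i)
      (show ε2 i p.2 ≤ φ1 i p.1 + (ε2 i p.2 - φ1 i p.1) by omega)
    simpa [mul_add] using h
  constructor
  · intro h
    rw [hmax, hsum] at h
    have hge : ∑ i, a i * ε2 i p.2 ≤ L2 := by
      calc ∑ i, a i * ε2 i p.2
          ≤ ∑ i, (a i * φ1 i p.1 + a i * (ε2 i p.2 - φ1 i p.1)) :=
            Finset.sum_le_sum hterm
        _ = L2 := by rw [Finset.sum_add_distrib, h]
    have hS2 : ∑ i, a i * ε2 i p.2 = L2 := le_antisymm hge (hL2min p.2)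
    refine ⟨hS2, ?_⟩
    have heq : ∑ i, a i * ε2 i p.2
        = ∑ i, (a i * φ1 i p.1 + a i * (ε2 i p.2 - φ1 i p.1)) := by
      rw [Finset.sum_add_distrib, h, hS2]
    have hall := (Finset.sum_eq_sum_iff_of_le hterm).1 heq
    intro i
    have hi := hall i (Finset.mem_univ i)
    have h2 : a i * (φ1 i p.1 + (ε2 i p.2 - φ1 i p.1)) = a i * ε2 i p.2 := by
      rw [mul_add]; omega
    have h3 := Nat.eq_of_mul_eq_mul_left (ha i) h2
    omega
  · rintro ⟨hS2, hφε⟩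
    rw [hmax, hsum]
    have heq : ∑ i, (a i * φ1 i p.1 + a i * (ε2 i p.2 - φ1 i p.1))
        = ∑ i, a i * ε2 i p.2 := by
      refine Finset.sum_congr rfl fun i _ => ?_
      have hi := hφε i
      rw [← mul_add]
      congr 1
      omega
    calc ∑ i, a i * φ1 i p.1 + ∑ i, a i * (ε2 i p.2 - φ1 i p.1)
        = ∑ i, (a i * φ1 i p.1 + a i * (ε2 i p.2 - φ1 i p.1)) :=
          Finset.sum_add_distrib.symm
      _ = ∑ i, a i * ε2 i p.2 := heq
      _ = L2 := hS2
end

section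
/- If B1 and B2 are finite crystals (objects of C^fin) satisfying condition (3) — for any dominant classical weight λ with ⟨c,λ⟩ ≥ lev B there exists b ∈ B with ε(b) ≤ λ, and likewise for φ — then B1⊗B2 also satisfies condition (3). -/
/-- if finite crystals `B1`, `B2` satisfy condition (3) of the
category 𝒞^fin (for every dominant classical weight `μ` with
`⟨c,μ⟩ ≥ lev B` there is `b ∈ B` with `ε(b) ≤ μ`, and likewise for `φ`),
then so does `B1⊗B2` (whose level is `max(lev B1, lev B2)`).
One may use the isomorphism `B1⊗B2 ≅ B2⊗B1` (given here as an equivalence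
`R` preserving the tensor-product `ε` and `φ`). -/
theorem stmt7 {I B1 B2 : Type*} [Fintype I]
    (ε1 φ1 : I → B1 → ℕ) (ε2 φ2 : I → B2 → ℕ)
    (a : I → ℕ) (ha : ∀ i, 0 < a i)
    (L1 L2 : ℕ)
    (hc1 : ∀ b, ∑ i, a i * ε1 i b = ∑ i, a i * φ1 i b)
    (hc2 : ∀ b, ∑ i, a i * ε2 i b = ∑ i, a i * φ2 i b)
    (hL1min : ∀ b, L1 ≤ ∑ i, a i * ε1 i b) (hL1ex : ∃ b, ∑ i, a i * ε1 i b = L1)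
    (hL2min : ∀ b, L2 ≤ ∑ i, a i * ε2 i b) (hL2ex : ∃ b, ∑ i, a i * ε2 i b = L2)
    -- condition (3) for B1 and B2
    (hcond1ε : ∀ μ : I → ℕ, L1 ≤ ∑ i, a i * μ i → ∃ b1, ∀ i, ε1 i b1 ≤ μ i)
    (hcond1φ : ∀ μ : I → ℕ, L1 ≤ ∑ i, a i * μ i → ∃ b1, ∀ i, φ1 i b1 ≤ μ i)
    (hcond2ε : ∀ μ : I → ℕ, L2 ≤ ∑ i, a i * μ i → ∃ b2, ∀ i, ε2 i b2 ≤ μ i)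
    (hcond2φ : ∀ μ : I → ℕ, L2 ≤ ∑ i, a i * μ i → ∃ b2, ∀ i, φ2 i b2 ≤ μ i)
    -- tensor products B1⊗B2 and B2⊗B1
    (εT φT : I → B1 × B2 → ℕ)
    (hεT : ∀ i p, εT i p = max (ε1 i p.1) (ε1 i p.1 + ε2 i p.2 - φ1 i p.1))
    (hφT : ∀ i p, φT i p = max (φ2 i p.2) (φ1 i p.1 + φ2 i p.2 - ε2 i p.2))
    (εT' φT' : I → B2 × B1 → ℕ)
    (hεT' : ∀ i p, εT' i p = max (ε2 i p.1) (ε2 i p.1 + ε1 i p.2 - φ2 i p.1))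
    (hφT' : ∀ i p, φT' i p = max (φ1 i p.2) (φ2 i p.1 + φ1 i p.2 - ε1 i p.2))
    -- the isomorphism B1⊗B2 ≅ B2⊗B1
    (R : B1 × B2 ≃ B2 × B1)
    (hRε : ∀ i p, εT' i (R p) = εT i p) (hRφ : ∀ i p, φT' i (R p) = φT i p) :
    ∀ μ : I → ℕ, max L1 L2 ≤ ∑ i, a i * μ i →
      (∃ p : B1 × B2, ∀ i, εT i p ≤ μ i) ∧
      (∃ p : B1 × B2, ∀ i, φT i p ≤ μ i) := by
  intro mu hmu
  constructor
  · obtain ⟨b1, hb1⟩ := hcond1ε mu (le_trans (le_max_left _ _) hmu)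
    set mu' : I → ℕ := fun i => mu i - ε1 i b1 + φ1 i b1 with hmu'
    have hsum : ∑ i, a i * mu' i = ∑ i, a i * mu i := by
      have key : ∑ i, a i * mu' i + ∑ i, a i * ε1 i b1
          = ∑ i, a i * mu i + ∑ i, a i * φ1 i b1 := by
        rw [← Finset.sum_add_distrib, ← Finset.sum_add_distrib]
        apply Finset.sum_congr rfl
        intro i _
        have hb := hb1 i
        have : mu' i + ε1 i b1 = mu i + φ1 i b1 := by
          simp only [hmu']; omega
        rw [← Nat.mul_add, ← Nat.mul_add, this]
      have := hc1 b1
      omega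
    obtain ⟨b2, hb2⟩ := hcond2ε mu' (by
      rw [hsum]; exact le_trans (le_max_right _ _) hmu)
    refine ⟨(b1, b2), fun i => ?_⟩
    rw [hεT]
    have h1 := hb1 i
    have h2 := hb2 i
    simp only [hmu'] at h2
    simp only [max_le_iff]
    omega
  · obtain ⟨b2, hb2⟩ := hcond2φ mu (le_trans (le_max_right _ _) hmu)
    set mu' : I → ℕ := fun i => mu i - φ2 i b2 + ε2 i b2 with hmu'
    have hsum : ∑ i, a i * mu' i = ∑ i, a i * mu i := by
      have key : ∑ i, a i * mu' i + ∑ i, a i * φ2 i b2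
          = ∑ i, a i * mu i + ∑ i, a i * ε2 i b2 := by
        rw [← Finset.sum_add_distrib, ← Finset.sum_add_distrib]
        apply Finset.sum_congr rfl
        intro i _
        have hb := hb2 i
        have : mu' i + φ2 i b2 = mu i + ε2 i b2 := by
          simp only [hmu']; omega
        rw [← Nat.mul_add, ← Nat.mul_add, this]
      have := hc2 b2
      omega
    obtain ⟨b1, hb1⟩ := hcond1φ mu' (by
      rw [hsum]; exact le_trans (le_max_left _ _) hmu)
    refine ⟨(b1, b2), fun i => ?_⟩
    rw [hφT]
    have h1 := hb1 i
    have h2 := hb2 i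
    simp only [hmu'] at h1
    simp only [max_le_iff]
    omega
end

section
/- Let B = B1⊗B2 be a tensor product of finite crystals with combinatorial R-matrix sending b1⊗b2 ↦ b̃2⊗b̃1 and b1'⊗b2' ↦ b̃2'⊗b̃1'. Then the energy function on B⊗B decomposes as H_{BB}((b1⊗b2)⊗(b1'⊗b2')) = H_{B1B2}(b1⊗b2) + H_{B1B1}(b̃1⊗b1') + H_{B2B2}(b2⊗b̃2') + H_{B1B2}(b1'⊗b2'), up to an overall additive constant. -/
/-- Iterated application of a partial (crystal) operator. -/
def iterOpt {B : Type*} (g : B → Option B) : ℕ → B → Option B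
  | 0, b => some b
  | n + 1, b => (g b).bind (iterOpt g n)

/-- Tensor product rule for `ẽ`: acts on the left factor iff `φ(b1) ≥ ε(b2)`. -/
def tensE {B1 B2 : Type*} (e1 : B1 → Option B1) (e2 : B2 → Option B2)
    (φ1 : B1 → ℕ) (ε2 : B2 → ℕ) (p : B1 × B2) : Option (B1 × B2) :=
  if ε2 p.2 ≤ φ1 p.1 then (e1 p.1).map (fun b => (b, p.2))
  else (e2 p.2).map (fun b => (p.1, b))

/-- Tensor product rule for `f̃`: acts on the left factor iff `φ(b1) > ε(b2)`. -/
def tensF {B1 B2 : Type*} (f1 : B1 → Option B1) (f2 : B2 → Option B2)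
    (φ1 : B1 → ℕ) (ε2 : B2 → ℕ) (p : B1 × B2) : Option (B1 × B2) :=
  if ε2 p.2 < φ1 p.1 then (f1 p.1).map (fun b => (b, p.2))
  else (f2 p.2).map (fun b => (p.1, b))


/-- Energy function condition (4.2) on `B1⊗B2`, relative to the combinatorial
R-matrix `R : B1⊗B2 → B2⊗B1`, `b1⊗b2 ↦ b̃2⊗b̃1`. -/
def IsEnergy {I B1 B2 : Type*} [DecidableEq I] (i0 : I)
    (e1 : I → B1 → Option B1) (e2 : I → B2 → Option B2)
    (ε1 φ1 : I → B1 → ℕ) (ε2 φ2 : I → B2 → ℕ)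
    (R : B1 × B2 → B2 × B1) (H : B1 × B2 → ℤ) : Prop :=
  ∀ i p q, tensE (e1 i) (e2 i) (φ1 i) (ε2 i) p = some q →
    H q = H p +
      (if i = i0 then
        (if ε2 i0 p.2 ≤ φ1 i0 p.1 ∧ ε1 i0 (R p).2 ≤ φ2 i0 (R p).1 then 1
         else if φ1 i0 p.1 < ε2 i0 p.2 ∧ φ2 i0 (R p).1 < ε1 i0 (R p).2 then -1
         else 0)
       else 0)

/-- Energy function condition (4.3) on a homogeneous tensor product `B⊗B`. -/
def IsEnergyHom {I B : Type*} [DecidableEq I] (i0 : I)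
    (e : I → B → Option B) (ε φ : I → B → ℕ) (H : B × B → ℤ) : Prop :=
  ∀ i p q, tensE (e i) (e i) (φ i) (ε i) p = some q →
    H q = H p + (if i = i0 then (if ε i0 p.2 ≤ φ i0 p.1 then 1 else -1) else 0)

/-- for `B = B1⊗B2`, the energy function on `B⊗B` decomposes,
up to an overall additive constant, as
`H_BB((b1⊗b2)⊗(b1'⊗b2')) = H_{B1B2}(b1⊗b2) + H_{B1B1}(b̃1⊗b1')
  + H_{B2B2}(b2⊗b̃2') + H_{B1B2}(b1'⊗b2')`,
where `R(b1,b2) = (b̃2,b̃1)` and `R(b1',b2') = (b̃2',b̃1')`. -/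
theorem stmt8 {I B1 B2 : Type*} [DecidableEq I] (i0 : I)
    (e1 : I → B1 → Option B1) (e2 : I → B2 → Option B2)
    (ε1 φ1 : I → B1 → ℕ) (ε2 φ2 : I → B2 → ℕ)
    -- the combinatorial R-matrix: a crystal isomorphism B1⊗B2 ≅ B2⊗B1
    (R : B1 × B2 ≃ B2 × B1)
    (hRcomm : ∀ i p, tensE (e2 i) (e1 i) (φ2 i) (ε1 i) (R p) =
      Option.map R (tensE (e1 i) (e2 i) (φ1 i) (ε2 i) p))
    -- the crystal B = B1⊗B2
    (eB : I → B1 × B2 → Option (B1 × B2))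
    (heB : ∀ i, eB i = tensE (e1 i) (e2 i) (φ1 i) (ε2 i))
    (εB φB : I → B1 × B2 → ℕ)
    (hεB : ∀ i p, εB i p = max (ε1 i p.1) (ε1 i p.1 + ε2 i p.2 - φ1 i p.1))
    (hφB : ∀ i p, φB i p = max (φ2 i p.2) (φ1 i p.1 + φ2 i p.2 - ε2 i p.2))
    (hRε : ∀ i p, max (ε2 i (R p).1) (ε2 i (R p).1 + ε1 i (R p).2 - φ2 i (R p).1) = εB i p)
    (hRφ : ∀ i p, max (φ1 i (R p).2) (φ2 i (R p).1 + φ1 i (R p).2 - ε1 i (R p).2) = φB i p)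
    -- the energy functions
    (H12 : B1 × B2 → ℤ) (hH12 : IsEnergy i0 e1 e2 ε1 φ1 ε2 φ2 R H12)
    (H11 : B1 × B1 → ℤ) (hH11 : IsEnergyHom i0 e1 ε1 φ1 H11)
    (H22 : B2 × B2 → ℤ) (hH22 : IsEnergyHom i0 e2 ε2 φ2 H22)
    (HBB : (B1 × B2) × (B1 × B2) → ℤ) (hHBB : IsEnergyHom i0 eB εB φB HBB)
    -- B⊗B is connected
    (hconn : ∀ P Q : (B1 × B2) × (B1 × B2), Relation.ReflTransGen
      (fun P Q => ∃ i, tensE (eB i) (eB i) (φB i) (εB i) P = some Q ∨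
        tensE (eB i) (eB i) (φB i) (εB i) Q = some P) P Q) :
    ∃ c : ℤ, ∀ (b1 : B1) (b2 : B2) (b1' : B1) (b2' : B2),
      HBB ((b1, b2), (b1', b2')) =
        H12 (b1, b2) + H11 ((R (b1, b2)).2, b1') + H22 (b2, (R (b1', b2')).1)
          + H12 (b1', b2') + c := by
  classical
  set F : (B1 × B2) × (B1 × B2) → ℤ := fun P =>
    H12 P.1 + H11 ((R P.1).2, P.2.1) + H22 (P.1.2, (R P.2).1) + H12 P.2 with hF
  have key : ∀ i P Q, tensE (eB i) (eB i) (φB i) (εB i) P = some Q →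
      HBB Q - F Q = HBB P - F P := by
    intro i P Q h
    obtain ⟨⟨b1, b2⟩, b1', b2'⟩ := P
    have hBB := hHBB i _ _ h
    rw [tensE] at h
    -- abbreviations
    have hεp' : εB i (b1', b2') = max (ε1 i b1') (ε1 i b1' + ε2 i b2' - φ1 i b1') :=
      hεB i (b1', b2')
    have hφp : φB i (b1, b2) = max (φ2 i b2) (φ1 i b1 + φ2 i b2 - ε2 i b2) :=
      hφB i (b1, b2)
    have hφR : max (φ1 i (R (b1, b2)).2)
        (φ2 i (R (b1, b2)).1 + φ1 i (R (b1, b2)).2 - ε1 i (R (b1, b2)).2)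
        = φB i (b1, b2) := hRφ i (b1, b2)
    have hεR : max (ε2 i (R (b1', b2')).1)
        (ε2 i (R (b1', b2')).1 + ε1 i (R (b1', b2')).2 - φ2 i (R (b1', b2')).1)
        = εB i (b1', b2') := hRε i (b1', b2')
    by_cases hA : εB i ((b1, b2), (b1', b2')).2 ≤ φB i ((b1, b2), (b1', b2')).1
    · -- ẽ acts on the left factor (b1,b2)
      rw [if_pos hA] at h
      rw [Option.map_eq_some_iff] at h
      obtain ⟨q, hq, hQ⟩ := h
      subst hQ
      simp only at hA
      rw [heB] at hq
      have h12 := hH12 i _ _ hq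
      have hR := hRcomm i (b1, b2)
      rw [hq, Option.map_some] at hR
      rw [tensE] at hq hR
      simp only at hq hR
      -- Δ for the H11 term
      have hΔ11 : H11 ((R q).2, b1') = H11 ((R (b1, b2)).2, b1') +
          (if i = i0 ∧ ¬ ε1 i (R (b1, b2)).2 ≤ φ2 i (R (b1, b2)).1 then 1 else 0) := by
        by_cases hc1 : ε1 i (R (b1, b2)).2 ≤ φ2 i (R (b1, b2)).1
        · rw [if_pos hc1, Option.map_eq_some_iff] at hR
          obtain ⟨c2, -, hRq⟩ := hR
          rw [← hRq]
          simp [hc1]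
        · rw [if_neg hc1, Option.map_eq_some_iff] at hR
          obtain ⟨c1, hc1e, hRq⟩ := hR
          have hle : ε1 i b1' ≤ φ1 i (R (b1, b2)).2 := by
            have h1 : ε1 i b1' ≤ εB i (b1', b2') := by rw [hεp']; exact le_max_left _ _
            have h2 : φB i (b1, b2) = φ1 i (R (b1, b2)).2 := by
              rw [← hφR]; exact max_eq_left (by omega)
            omega
          have hstep : tensE (e1 i) (e1 i) (φ1 i) (ε1 i) ((R (b1, b2)).2, b1')
              = some (c1, b1') := by
            rw [tensE]; simp only [if_pos hle, hc1e, Option.map_some]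
          have h11 := hH11 i _ _ hstep
          rw [← hRq]
          by_cases hi : i = i0
          · subst hi; rw [h11]; simp [hle, hc1]
          · rw [h11]; simp [hi]
      -- Δ for the H22 term
      have hΔ22 : H22 (q.2, (R (b1', b2')).1) = H22 (b2, (R (b1', b2')).1) +
          (if i = i0 ∧ ¬ ε2 i b2 ≤ φ1 i b1 then 1 else 0) := by
        by_cases hc2 : ε2 i b2 ≤ φ1 i b1
        · rw [if_pos hc2, Option.map_eq_some_iff] at hq
          obtain ⟨a1, -, hq1⟩ := hq
          rw [← hq1]
          simp [hc2]
        · rw [if_neg hc2, Option.map_eq_some_iff] at hq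
          obtain ⟨a2, ha2, hq1⟩ := hq
          have hle : ε2 i (R (b1', b2')).1 ≤ φ2 i b2 := by
            have h1 : ε2 i (R (b1', b2')).1 ≤ εB i (b1', b2') := by
              rw [← hεR]; exact le_max_left _ _
            have h2 : φB i (b1, b2) = φ2 i b2 := by
              rw [hφp]; exact max_eq_left (by omega)
            omega
          have hstep : tensE (e2 i) (e2 i) (φ2 i) (ε2 i) (b2, (R (b1', b2')).1)
              = some (a2, (R (b1', b2')).1) := by
            rw [tensE]; simp only [if_pos hle, ha2, Option.map_some]
          have h22 := hH22 i _ _ hstep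
          rw [← hq1]
          by_cases hi : i = i0
          · subst hi; rw [h22]; simp [hle, hc2]
          · rw [h22]; simp [hi]
      -- now conclude
      simp only [hF]
      simp only at hBB ⊢
      rw [hBB, h12, hΔ11, hΔ22]
      by_cases hi : i = i0
      · subst hi
        simp only [eq_self_iff_true, if_true, true_and]
        split_ifs <;> omega
      · simp only [hi, false_and, if_false, add_zero]
    · -- ẽ acts on the right factor (b1',b2')
      rw [if_neg hA] at h
      rw [Option.map_eq_some_iff] at h
      obtain ⟨q, hq, hQ⟩ := h
      subst hQ
      simp only at hA
      rw [heB] at hq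
      have h12 := hH12 i _ _ hq
      have hR := hRcomm i (b1', b2')
      rw [hq, Option.map_some] at hR
      rw [tensE] at hq hR
      simp only at hq hR
      have hA' : φB i (b1, b2) < εB i (b1', b2') := not_le.mp hA
      -- Δ for the H11 term (right factor b1' may move)
      have hΔ11 : H11 ((R (b1, b2)).2, q.1) = H11 ((R (b1, b2)).2, b1') +
          (if i = i0 ∧ ε2 i b2' ≤ φ1 i b1' then -1 else 0) := by
        by_cases hc2 : ε2 i b2' ≤ φ1 i b1'
        · rw [if_pos hc2, Option.map_eq_some_iff] at hq
          obtain ⟨a1, ha1, hq1⟩ := hq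
          have hgt : ¬ ε1 i b1' ≤ φ1 i (R (b1, b2)).2 := by
            have h1 : φ1 i (R (b1, b2)).2 ≤ φB i (b1, b2) := by
              rw [← hφR]; exact le_max_left _ _
            have h2 : εB i (b1', b2') = ε1 i b1' := by
              rw [hεp']; exact max_eq_left (by omega)
            omega
          have hstep : tensE (e1 i) (e1 i) (φ1 i) (ε1 i) ((R (b1, b2)).2, b1')
              = some ((R (b1, b2)).2, a1) := by
            rw [tensE]; simp only [if_neg hgt, ha1, Option.map_some]
          have h11 := hH11 i _ _ hstep
          rw [← hq1]
          by_cases hi : i = i0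
          · subst hi; rw [h11]; simp [hgt, hc2]
          · rw [h11]; simp [hi]
        · rw [if_neg hc2, Option.map_eq_some_iff] at hq
          obtain ⟨a2, -, hq1⟩ := hq
          rw [← hq1]
          simp [hc2]
      -- Δ for the H22 term (right factor b̃2' may move)
      have hΔ22 : H22 (b2, (R q).1) = H22 (b2, (R (b1', b2')).1) +
          (if i = i0 ∧ ε1 i (R (b1', b2')).2 ≤ φ2 i (R (b1', b2')).1 then -1 else 0) := by
        by_cases hc1 : ε1 i (R (b1', b2')).2 ≤ φ2 i (R (b1', b2')).1
        · rw [if_pos hc1, Option.map_eq_some_iff] at hR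
          obtain ⟨c2, hc2e, hRq⟩ := hR
          have hgt : ¬ ε2 i (R (b1', b2')).1 ≤ φ2 i b2 := by
            have h1 : φ2 i b2 ≤ φB i (b1, b2) := by rw [hφp]; exact le_max_left _ _
            have h2 : εB i (b1', b2') = ε2 i (R (b1', b2')).1 := by
              rw [← hεR]; exact max_eq_left (by omega)
            omega
          have hstep : tensE (e2 i) (e2 i) (φ2 i) (ε2 i) (b2, (R (b1', b2')).1)
              = some (b2, c2) := by
            rw [tensE]; simp only [if_neg hgt, hc2e, Option.map_some]
          have h22 := hH22 i _ _ hstep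
          rw [← hRq]
          by_cases hi : i = i0
          · subst hi; rw [h22]; simp [hgt, hc1]
          · rw [h22]; simp [hi]
        · rw [if_neg hc1, Option.map_eq_some_iff] at hR
          obtain ⟨c1, -, hRq⟩ := hR
          rw [← hRq]
          simp [hc1]
      simp only [hF]
      simp only at hBB ⊢
      rw [hBB, h12, hΔ11, hΔ22]
      by_cases hi : i = i0
      · subst hi
        simp only [eq_self_iff_true, if_true, true_and]
        split_ifs <;> omega
      · simp only [hi, false_and, if_false, add_zero]
  -- D is constant on connected components
  have const : ∀ P Q : (B1 × B2) × (B1 × B2),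
      Relation.ReflTransGen
        (fun P Q => ∃ i, tensE (eB i) (eB i) (φB i) (εB i) P = some Q ∨
          tensE (eB i) (eB i) (φB i) (εB i) Q = some P) P Q →
      HBB P - F P = HBB Q - F Q := by
    intro P Q h
    induction h with
    | refl => rfl
    | tail _ hstep ih =>
      obtain ⟨i, hstep | hstep⟩ := hstep
      · rw [ih, key i _ _ hstep]
      · rw [ih, ← key i _ _ hstep]
  by_cases hne : Nonempty (B1 × B2)
  · obtain ⟨p0⟩ := hne
    refine ⟨HBB (p0, p0) - F (p0, p0), ?_⟩
    intro b1 b2 b1' b2'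
    have := const ((b1, b2), (b1', b2')) (p0, p0) (hconn _ _)
    simp only [hF] at this ⊢
    omega
  · exact ⟨0, fun b1 b2 _ _ => absurd ⟨(b1, b2)⟩ hne⟩
end

section
/- Let P(p,B) be the set of paths on a finite crystal B with reference path p. Then p' = ⋯⊗b_j⊗⋯⊗b_1 ∈ P(p,B) is a highest weight element (ẽ_i p' = 0 for all i) if and only if for every j, b_j ∈ B_min and φ(b_{j+1}) = ε(b_j). -/
/-- `ε_i` of the finite tail `p(k)⊗⋯⊗p(1)` of a path (here `p j` denotes the
`(j+1)`-st tensor factor from the right), computed by the tensor product rule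
`ε(b⊗T) = max(ε(b), ε(b) + ε(T) − φ(b))`. -/
def epsTail {B : Type*} (ε φ : B → ℕ) (p : ℕ → B) : ℕ → ℕ
  | 0 => 0
  | k + 1 => max (ε (p k)) (ε (p k) + epsTail ε φ p k - φ (p k))

/-- One application of `ẽ_i` to a semi-infinite path `⋯⊗p(2)⊗p(1)`:
by the tensor product rule, `ẽ_i` acts at the factor `p j` iff
`φ_i(p j) ≥ ε_i(p(j)⊗⋯⊗p(1)'s tail below j)` and at every factor above `j`
the rule passes to the right.  `ẽ_i p = 0` iff no `q` with `EStep … p q`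
exists. -/
def EStep {B : Type*} (e : B → Option B) (ε φ : B → ℕ) (p q : ℕ → B) : Prop :=
  ∃ j, epsTail ε φ p j ≤ φ (p j) ∧ (∀ k, j < k → φ (p k) < epsTail ε φ p k) ∧
    e (p j) = some (q j) ∧ ∀ k, k ≠ j → q k = p k

/-- `n`-fold application of `ẽ_i` on paths. -/
def EChain {B : Type*} (e : B → Option B) (ε φ : B → ℕ) :
    ℕ → (ℕ → B) → (ℕ → B) → Prop
  | 0, p, q => p = q
  | n + 1, p, q => ∃ r, EStep e ε φ p r ∧ EChain e ε φ n r q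


/-- Unfolding lemma for `epsTail`, rewriting the `max` via truncated subtraction. -/
lemma epsTail_succ {B : Type*} (ε φ : B → ℕ) (p : ℕ → B) (k : ℕ) :
    epsTail ε φ p (k + 1) = ε (p k) + (epsTail ε φ p k - φ (p k)) := by
  show max (ε (p k)) (ε (p k) + epsTail ε φ p k - φ (p k)) = _
  omega

/-- If `x ≤ y` pointwise and the positive-weighted sum of `y` is at most that of `x`,
then `x = y`. -/
lemma sum_mul_eq_of_le {I : Type*} [Fintype I] (a x y : I → ℕ) (ha : ∀ i, 0 < a i)
    (hle : ∀ i, x i ≤ y i) (hsum : ∑ i, a i * y i ≤ ∑ i, a i * x i) (i : I) :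
    y i = x i := by
  by_contra h
  have hlt : x i < y i := lt_of_le_of_ne (hle i) (fun hh => h hh.symm)
  have h2 : ∑ j, a j * x j < ∑ j, a j * y j :=
    Finset.sum_lt_sum (fun j _ => Nat.mul_le_mul (le_refl _) (hle j))
      ⟨i, Finset.mem_univ i, mul_lt_mul_of_pos_left hlt (ha i)⟩
  omega

/-- a path `p ∈ 𝒫(p̄,B)` is a highest weight element
(`ẽ_i p = 0` for all `i`) iff for every `j`, `p(j) ∈ B_min` and
`φ(p(j+1)) = ε(p(j))`.  Here `B` is a finite crystal of level `L` (with
`⟨c,·⟩ = ∑_i a_i^∨ ·`), and `p̄` is a reference path. -/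
theorem stmt9 {I B : Type*} [Fintype I]
    (e f : I → B → Option B) (ε φ : I → B → ℕ)
    (hinv : ∀ i b b', f i b = some b' ↔ e i b' = some b)
    (hε : ∀ i b n, iterOpt (e i) n b ≠ none ↔ n ≤ ε i b)
    (hφ : ∀ i b n, iterOpt (f i) n b ≠ none ↔ n ≤ φ i b)
    (a : I → ℕ) (ha : ∀ i, 0 < a i) (L : ℕ)
    (hc : ∀ b, ∑ i, a i * ε i b = ∑ i, a i * φ i b)
    (hLmin : ∀ b, L ≤ ∑ i, a i * ε i b) (hLex : ∃ b, ∑ i, a i * ε i b = L)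
    (hcondε : ∀ μ : I → ℕ, L ≤ ∑ i, a i * μ i → ∃ b, ∀ i, ε i b ≤ μ i)
    (hcondφ : ∀ μ : I → ℕ, L ≤ ∑ i, a i * μ i → ∃ b, ∀ i, φ i b ≤ μ i)
    -- the reference path
    (pbar : ℕ → B)
    (hbar : ∀ j, (∑ i, a i * ε i (pbar j) = L) ∧
      ∀ i, φ i (pbar (j + 1)) = ε i (pbar j))
    -- p ∈ 𝒫(p̄, B)
    (p : ℕ → B) (hp : ∃ N, ∀ k, N ≤ k → p k = pbar k) :
    (∀ i, ¬ ∃ q, EStep (e i) (ε i) (φ i) p q) ↔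
      ∀ j, (∑ i, a i * ε i (p j) = L) ∧ ∀ i, φ i (p (j + 1)) = ε i (p j) := by
  classical
  obtain ⟨N, hN⟩ := hp
  have hms : ∀ (i : I) (k : ℕ), epsTail (ε i) (φ i) p (k + 1)
      = ε i (p k) + (epsTail (ε i) (φ i) p k - φ i (p k)) :=
    fun i k => epsTail_succ _ _ _ _
  have hm0 : ∀ (i : I), epsTail (ε i) (φ i) p 0 = 0 := fun i => rfl
  constructor
  · intro H
    -- the φ/ε relation in the far tail of the path
    have hφε : ∀ k, N ≤ k → ∀ i, φ i (p (k + 1)) = ε i (p k) := by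
      intro k hk i
      rw [hN (k + 1) (by omega), hN k hk]
      exact (hbar k).2 i
    -- Step 1: no E-step forces `epsTail k ≤ φ (p k)` for all k in the tail
    have key : ∀ (i : I) (k : ℕ), N ≤ k → epsTail (ε i) (φ i) p k ≤ φ i (p k) := by
      intro i
      by_contra hcon
      push_neg at hcon
      obtain ⟨k0, hk0, hlt⟩ := hcon
      have tstep : ∀ k, N ≤ k →
          epsTail (ε i) (φ i) p (k + 1) - φ i (p (k + 1))
            = epsTail (ε i) (φ i) p k - φ i (p k) := by
        intro k hk
        rw [hφε k hk i, hms]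
        omega
      have tN : ∀ d, epsTail (ε i) (φ i) p (N + d) - φ i (p (N + d))
          = epsTail (ε i) (φ i) p N - φ i (p N) := by
        intro d
        induction d with
        | zero => rfl
        | succ d ih =>
          rw [show N + (d + 1) = (N + d) + 1 from rfl,
            tstep (N + d) (Nat.le_add_right N d), ih]
      have ht : ∀ k, N ≤ k → φ i (p k) < epsTail (ε i) (φ i) p k := by
        intro k hk
        have h1 := tN (k - N)
        have h2 := tN (k0 - N)
        rw [Nat.add_sub_cancel' hk] at h1
        rw [Nat.add_sub_cancel' hk0] at h2
        omega
      -- take the greatest j with epsTail j ≤ φ (p j); an E-step exists there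
      set j := Nat.findGreatest (fun j => epsTail (ε i) (φ i) p j ≤ φ i (p j)) N with hj
      have hPj : epsTail (ε i) (φ i) p j ≤ φ i (p j) :=
        Nat.findGreatest_spec (P := fun j => epsTail (ε i) (φ i) p j ≤ φ i (p j))
          (Nat.zero_le N)
          (show epsTail (ε i) (φ i) p 0 ≤ φ i (p 0) from Nat.zero_le _)
      have hgt : ∀ k, j < k → φ i (p k) < epsTail (ε i) (φ i) p k := by
        intro k hk
        rcases le_or_gt k N with h | h
        · have := Nat.findGreatest_is_greatest hk h
          omega
        · exact ht k (le_of_lt h)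
      have hj1 : φ i (p (j + 1)) < epsTail (ε i) (φ i) p (j + 1) :=
        hgt (j + 1) (Nat.lt_succ_self j)
      have hmj1 : epsTail (ε i) (φ i) p (j + 1) = ε i (p j) := by
        rw [hms]; omega
      have hε1 : 1 ≤ ε i (p j) := by omega
      have hne : iterOpt (e i) 1 (p j) ≠ none := (hε i (p j) 1).mpr hε1
      obtain ⟨b', hb'⟩ : ∃ b', e i (p j) = some b' := by
        cases hev : e i (p j) with
        | none =>
          exfalso
          apply hne
          show (e i (p j)).bind (iterOpt (e i) 0) = none
          rw [hev]
          rfl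
        | some b' => exact ⟨b', rfl⟩
      exact H i ⟨Function.update p j b', j, hPj, hgt, by simp [hb'],
        fun k hk => Function.update_of_ne hk _ _⟩
    -- Step 2: weighted-sum (level) bookkeeping
    have hsucc_eq : ∀ (i : I) (k : ℕ), N ≤ k →
        epsTail (ε i) (φ i) p (k + 1) = ε i (p k) := by
      intro i k hk
      have hk2 := key i k hk
      rw [hms]; omega
    have hMmono : ∀ k, (∑ i, a i * epsTail (ε i) (φ i) p k)
        ≤ ∑ i, a i * epsTail (ε i) (φ i) p (k + 1) := by
      intro k
      have hpt : ∀ i ∈ Finset.univ, a i * (epsTail (ε i) (φ i) p k + ε i (p k))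
          ≤ a i * (epsTail (ε i) (φ i) p (k + 1) + φ i (p k)) := by
        intro i _
        apply Nat.mul_le_mul (le_refl (a i))
        rw [hms]; omega
      have hsum := Finset.sum_le_sum hpt
      simp only [Nat.mul_add, Finset.sum_add_distrib] at hsum
      have hck := hc (p k)
      omega
    have hMono' : ∀ k k', k ≤ k' → (∑ i, a i * epsTail (ε i) (φ i) p k)
        ≤ ∑ i, a i * epsTail (ε i) (φ i) p k' := by
      intro k k' hkk
      induction k' with
      | zero => have : k = 0 := by omega
                subst this; exact le_refl _
      | succ k' ih =>
        rcases Nat.lt_or_ge k (k' + 1) with h | h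
        · exact le_trans (ih (by omega)) (hMmono k')
        · have : k = k' + 1 := by omega
          subst this; exact le_refl _
    have hMN : (∑ i, a i * epsTail (ε i) (φ i) p (N + 1)) = L := by
      calc (∑ i, a i * epsTail (ε i) (φ i) p (N + 1)) = ∑ i, a i * ε i (p N) := by
            apply Finset.sum_congr rfl
            intro i _
            rw [hsucc_eq i N (le_refl N)]
        _ = L := by rw [hN N (le_refl N)]; exact (hbar N).1
    have hMge : ∀ j, (∑ i, a i * ε i (p j)) ≤ ∑ i, a i * epsTail (ε i) (φ i) p (j + 1) := by
      intro j
      apply Finset.sum_le_sum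
      intro i _
      apply Nat.mul_le_mul (le_refl (a i))
      rw [hms]; omega
    have hMall : ∀ j, (∑ i, a i * epsTail (ε i) (φ i) p (j + 1)) = L := by
      intro j
      rcases le_or_gt j N with h | h
      · have h1 := hMono' (j + 1) (N + 1) (by omega)
        have h2 := hLmin (p j)
        have h3 := hMge j
        omega
      · calc (∑ i, a i * epsTail (ε i) (φ i) p (j + 1)) = ∑ i, a i * ε i (p j) := by
              apply Finset.sum_congr rfl
              intro i _
              rw [hsucc_eq i j (le_of_lt h)]
          _ = L := by rw [hN j (le_of_lt h)]; exact (hbar j).1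
    have hL1 : ∀ j, (∑ i, a i * ε i (p j)) = L := by
      intro j
      have h1 := hMall j
      have h2 := hMge j
      have h3 := hLmin (p j)
      omega
    have hleφ : ∀ j i, epsTail (ε i) (φ i) p j ≤ φ i (p j) := by
      intro j i
      have hsplit : (∑ i, a i * epsTail (ε i) (φ i) p (j + 1))
          = (∑ i, a i * ε i (p j)) + ∑ i, a i * (epsTail (ε i) (φ i) p j - φ i (p j)) := by
        rw [← Finset.sum_add_distrib]
        apply Finset.sum_congr rfl
        intro i _
        rw [hms, Nat.mul_add]
      have hz : (∑ i, a i * (epsTail (ε i) (φ i) p j - φ i (p j))) = 0 := by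
        have h1 := hMall j
        have h2 := hL1 j
        omega
      have h3 := (Finset.sum_eq_zero_iff).mp hz i (Finset.mem_univ i)
      have h4 := ha i
      have hx : epsTail (ε i) (φ i) p j - φ i (p j) = 0 := by
        rcases Nat.mul_eq_zero.mp h3 with h | h
        · omega
        · exact h
      omega
    have hεφ : ∀ j i, φ i (p (j + 1)) = ε i (p j) := by
      intro j i0
      have hmval : ∀ i, epsTail (ε i) (φ i) p (j + 1) = ε i (p j) := by
        intro i
        have h1 := hleφ j i
        rw [hms]; omega
      have hle : ∀ i, ε i (p j) ≤ φ i (p (j + 1)) := by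
        intro i
        have h1 := hleφ (j + 1) i
        rw [hmval i] at h1
        exact h1
      have hsum : (∑ i, a i * φ i (p (j + 1))) ≤ ∑ i, a i * ε i (p j) := by
        have h1 := hc (p (j + 1))
        have h2 := hL1 (j + 1)
        have h3 := hL1 j
        omega
      exact sum_mul_eq_of_le a (fun i => ε i (p j)) (fun i => φ i (p (j + 1)))
        ha hle hsum i0
    intro j
    exact ⟨hL1 j, fun i => hεφ j i⟩
  · intro hrhs i hq
    obtain ⟨q, j, hA, hB, hC, hD⟩ := hq
    have hmval : ∀ k, epsTail (ε i) (φ i) p (k + 1) = ε i (p k) := by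
      intro k
      induction k with
      | zero =>
        rw [hms]
        have := hm0 i
        omega
      | succ k ih =>
        rw [hms]
        have h1 := (hrhs k).2 i
        omega
    have h1 := hB (j + 1) (Nat.lt_succ_self j)
    have h2 := (hrhs j).2 i
    rw [hmval j] at h1
    omega
end

section
/- For the C_n^(1) crystal B^{1,l} (l odd) with the given explicit crystal structure, the values ε_0(b) = (l−s(b))/2 + max(x_1−x̄_1, 0) and φ_0(b) = (l−s(b))/2 + max(x̄_1−x_1, 0) are correct, i.e., ε_0(b) is the maximal n with ẽ_0^n b ≠ 0 and φ_0(b) is the maximal n with f̃_0^n b ≠ 0. -/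
/-- `s(b) = ∑_{i=1}^n (x_i + x̄_i)` for `b = (x, x̄)` (coordinates are the
values on `1,…,n`). -/
def sC (n : ℕ) (b : (ℕ → ℕ) × (ℕ → ℕ)) : ℕ :=
  (∑ i ∈ Finset.Icc 1 n, b.1 i) + ∑ i ∈ Finset.Icc 1 n, b.2 i

/-- Membership in the `C_n^{(1)}`-crystal `B^{1,l}`:
`x_i, x̄_i ∈ ℤ_{≥0}` supported on `1,…,n` and `s(b) ∈ {l, l−2, …, 1}`. -/
def ValidC (n l : ℕ) (b : (ℕ → ℕ) × (ℕ → ℕ)) : Prop :=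
  (∀ i, i = 0 ∨ n < i → b.1 i = 0 ∧ b.2 i = 0) ∧
    sC n b % 2 = l % 2 ∧ 1 ≤ sC n b ∧ sC n b ≤ l

/-- The operator `ẽ_0` on `B^{1,l}` of type `C_n^{(1)}`. -/
def e0C (n l : ℕ) (b : (ℕ → ℕ) × (ℕ → ℕ)) : Option ((ℕ → ℕ) × (ℕ → ℕ)) :=
  if b.2 1 + 2 ≤ b.1 1 then
    some (Function.update b.1 1 (b.1 1 - 2), b.2)
  else if b.1 1 = b.2 1 + 1 then
    some (Function.update b.1 1 (b.1 1 - 1), Function.update b.2 1 (b.2 1 + 1))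
  else if sC n b + 2 ≤ l then
    some (b.1, Function.update b.2 1 (b.2 1 + 2))
  else none

/-- The operator `f̃_0` on `B^{1,l}` of type `C_n^{(1)}`. -/
def f0C (n l : ℕ) (b : (ℕ → ℕ) × (ℕ → ℕ)) : Option ((ℕ → ℕ) × (ℕ → ℕ)) :=
  if b.2 1 ≤ b.1 1 then
    (if sC n b + 2 ≤ l then some (Function.update b.1 1 (b.1 1 + 2), b.2)
     else none)
  else if b.1 1 + 1 = b.2 1 then
    some (Function.update b.1 1 (b.1 1 + 1), Function.update b.2 1 (b.2 1 - 1))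
  else
    some (b.1, Function.update b.2 1 (b.2 1 - 2))

/- A string-length argument: `ẽ_0` lowers `ε_0` by exactly one wherever it is defined on a valid
`b`, and `ẽ_0 b = 0` only when `ε_0(b) = 0`. Each case of `ẽ_0` changes `s(b)` by `-2`, `0` or
`+2`, and the oddness of `l` keeps `s(b) ≥ 1` when `x_1` drops by two. The statement for `f̃_0`
follows because `f̃_0` is `ẽ_0` conjugated by the involution `x ↔ x̄`, which preserves `s` and
validity. -/

theorem iterOpt_ne_none_iff_le {B : Type*} (g : B → Option B) (V : B → Prop) (ε : B → ℕ)
    (hstep : ∀ b, V b → (g b = none ∧ ε b = 0) ∨ ∃ b', g b = some b' ∧ V b' ∧ ε b' + 1 = ε b) :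
    ∀ m b, V b → (iterOpt g m b ≠ none ↔ m ≤ ε b) := by
  intro m
  induction m with
  | zero => simp [iterOpt]
  | succ m ih =>
    intro b hb
    rcases hstep b hb with ⟨hg, hε⟩ | ⟨b', hg, hb', hε⟩
    · simp [iterOpt, hg, hε]
    · rw [iterOpt, hg, Option.bind_some, ih b' hb']
      omega

theorem iterOpt_conj_equiv {B C : Type*} (e : B ≃ C) (h : C → Option C) (m : ℕ) (b : B) :
    iterOpt (fun b => (h (e b)).map e.symm) m b = (iterOpt h m (e b)).map e.symm := by
  induction m generalizing b with
  | zero => simp [iterOpt]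
  | succ m ih =>
    simp only [iterOpt, Option.bind_map, Option.map_bind, Function.comp_def, ih,
      Equiv.apply_symm_apply]

section CrystalB1l

variable {n l : ℕ} {b b' : (ℕ → ℕ) × (ℕ → ℕ)}

def eps0C (n l : ℕ) (b : (ℕ → ℕ) × (ℕ → ℕ)) : ℕ :=
  (l - sC n b) / 2 + (b.1 1 - b.2 1)

theorem sC_swap (n : ℕ) (b : (ℕ → ℕ) × (ℕ → ℕ)) : sC n b.swap = sC n b :=
  add_comm _ _

theorem ValidC.swap (hb : ValidC n l b) : ValidC n l b.swap := by
  obtain ⟨hsupp, hs⟩ := hb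
  exact ⟨fun i hi => (hsupp i hi).symm, by rwa [sC_swap]⟩

theorem ValidC.one_le_n (hb : ValidC n l b) : 1 ≤ n := by
  by_contra! h
  have hs := hb.2.2.1
  simp [Nat.lt_one_iff.mp h, sC] at hs

theorem add_le_sC (hn : 1 ≤ n) (b : (ℕ → ℕ) × (ℕ → ℕ)) : b.1 1 + b.2 1 ≤ sC n b := by
  have h1 : 1 ∈ Finset.Icc 1 n := Finset.mem_Icc.mpr ⟨le_rfl, hn⟩
  exact add_le_add (Finset.single_le_sum (fun i _ => Nat.zero_le _) h1)
    (Finset.single_le_sum (fun i _ => Nat.zero_le _) h1)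

def AgreeOffOne (b b' : (ℕ → ℕ) × (ℕ → ℕ)) : Prop :=
  ∀ i ≠ 1, b'.1 i = b.1 i ∧ b'.2 i = b.2 i

theorem sC_add_eq_of_agreeOffOne (hn : 1 ≤ n) (hoff : AgreeOffOne b b') :
    sC n b' + (b.1 1 + b.2 1) = sC n b + (b'.1 1 + b'.2 1) := by
  have h1 : 1 ∈ Finset.Icc 1 n := Finset.mem_Icc.mpr ⟨le_rfl, hn⟩
  have hsum (f f' : ℕ → ℕ) (hf : ∀ i ≠ 1, f' i = f i) :
      (∑ i ∈ Finset.Icc 1 n, f' i) + f 1 = (∑ i ∈ Finset.Icc 1 n, f i) + f' 1 := by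
    rw [← Finset.add_sum_erase _ _ h1, ← Finset.add_sum_erase _ f h1,
      Finset.sum_congr rfl fun i hi => hf i (Finset.ne_of_mem_erase hi)]
    ring
  have h₁ := hsum b.1 b'.1 fun i hi => (hoff i hi).1
  have h₂ := hsum b.2 b'.2 fun i hi => (hoff i hi).2
  unfold sC
  omega

theorem ValidC.of_agreeOffOne (hb : ValidC n l b) (hoff : AgreeOffOne b b')
    (hpar : sC n b' % 2 = l % 2) (hpos : 1 ≤ sC n b') (hle : sC n b' ≤ l) :
    ValidC n l b' := by
  refine ⟨fun i hi => ?_, hpar, hpos, hle⟩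
  have hi1 : i ≠ 1 := by have := hb.one_le_n; omega
  rw [(hoff i hi1).1, (hoff i hi1).2]
  exact hb.1 i hi

theorem agreeOffOne_of_e0C_eq_some (h : e0C n l b = some b') : AgreeOffOne b b' := by
  intro i hi
  unfold e0C at h
  split_ifs at h <;> cases h <;> simp [Function.update_of_ne hi]

theorem e0C_step (hl : l % 2 = 1) (hb : ValidC n l b) :
    (e0C n l b = none ∧ eps0C n l b = 0) ∨
      ∃ b', e0C n l b = some b' ∧ ValidC n l b' ∧ eps0C n l b' + 1 = eps0C n l b := by
  have hn := hb.one_le_n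
  have hx := add_le_sC hn b
  rcases he : e0C n l b with _ | b'
  · refine Or.inl ⟨rfl, ?_⟩
    unfold e0C at he
    split_ifs at he
    unfold eps0C
    omega
  · have hoff := agreeOffOne_of_e0C_eq_some he
    have hs := sC_add_eq_of_agreeOffOne hn hoff
    unfold eps0C
    refine Or.inr ⟨b', rfl, hb.of_agreeOffOne hoff ?_ ?_ ?_, ?_⟩ <;>
    · obtain ⟨-, hpar, hpos, hsl⟩ := hb
      unfold e0C at he
      split_ifs at he <;> cases he <;> simp only [Function.update_self] at hs ⊢ <;> omega

theorem f0C_eq_swap_e0C_swap (n l : ℕ) (b : (ℕ → ℕ) × (ℕ → ℕ)) :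
    f0C n l b = (e0C n l b.swap).map Prod.swap := by
  unfold f0C e0C
  simp only [Prod.fst_swap, Prod.snd_swap, sC_swap]
  split_ifs <;> first | rfl | omega

end CrystalB1l

theorem stmt13_general (n l : ℕ) (hl : l % 2 = 1) :
    ∀ b, ValidC n l b →
      (∀ m, iterOpt (e0C n l) m b ≠ none ↔ m ≤ (l - sC n b) / 2 + (b.1 1 - b.2 1)) ∧
      (∀ m, iterOpt (f0C n l) m b ≠ none ↔ m ≤ (l - sC n b) / 2 + (b.2 1 - b.1 1)) := by
  have he : ∀ m b, ValidC n l b → (iterOpt (e0C n l) m b ≠ none ↔ m ≤ eps0C n l b) :=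
    iterOpt_ne_none_iff_le _ _ _ fun b hb => e0C_step hl hb
  intro b hb
  refine ⟨fun m => he m b hb, fun m => ?_⟩
  have hf : f0C n l = fun b => (e0C n l (Equiv.prodComm _ _ b)).map (Equiv.prodComm _ _).symm :=
    funext (f0C_eq_swap_e0C_swap n l)
  rw [hf, iterOpt_conj_equiv, ne_eq, Option.map_eq_none_iff, ← ne_eq,
    Equiv.prodComm_apply, he m _ hb.swap, eps0C, sC_swap, Prod.fst_swap, Prod.snd_swap]

/-- in the `C_n^{(1)}` crystal `B^{1,l}` (`l` odd),
`ε_0(b) = (l−s(b))/2 + (x_1−x̄_1)_+` is the maximal `n` with `ẽ_0^n b ≠ 0`,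
and `φ_0(b) = (l−s(b))/2 + (x̄_1−x_1)_+` is the maximal `n` with
`f̃_0^n b ≠ 0`. -/
theorem stmt13 (n l : ℕ) (hn : 1 ≤ n) (hl : l % 2 = 1) :
    ∀ b, ValidC n l b →
      (∀ m, iterOpt (e0C n l) m b ≠ none ↔ m ≤ (l - sC n b) / 2 + (b.1 1 - b.2 1)) ∧
      (∀ m, iterOpt (f0C n l) m b ≠ none ↔ m ≤ (l - sC n b) / 2 + (b.2 1 - b.1 1)) :=
  stmt13_general n l hl
end

section
/- For the A_{n−1}^(1) setup with λ ∈ (P_cl^+)_{l−m} and μ ∈ (P_cl^+)_m, the sequence p^{(λ,μ)}(j) = (λ_{i+j} + μ_{i+2j}) ⊗ (μ_{i+2j−1}) in B^{1,l}⊗B^{1,m} is a reference path: every p^{(λ,μ)}(j) is minimal and φ(p^{(λ,μ)}(j+1)) = ε(p^{(λ,μ)}(j)) = σ^j λ + σ^{2j} μ, where σ is the weight lattice automorphism σΛ_i = Λ_{i−1}. -/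
open Fin.NatCast

/-- The reference path `p^{(λ,μ)}(j) = (λ_{i+j} + μ_{i+2j}) ⊗ (μ_{i+2j−1})`
in `B^{1,l}⊗B^{1,m}` for `A_{n−1}^{(1)}` (indices mod `n`). -/
def prefA (n : ℕ) [NeZero n] (lam mu : Fin n → ℕ) (j : ℕ) :
    (Fin n → ℕ) × (Fin n → ℕ) :=
  (fun i => lam (i + (j : Fin n)) + mu (i + ((2 * j : ℕ) : Fin n)),
   fun i => mu (i + ((2 * j : ℕ) : Fin n) - 1))

/-
With `ε_i(a) = a_i` and `φ_i(a) = a_{i-1}`, minimality of `p(j)` reads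
`μ_{i+2j-1} ≤ λ_{i-1+j} + μ_{i-1+2j}`, true because the two `μ`-indices coincide, and for a
minimal `b₁ ⊗ b₂` the tensor rule collapses to `ε(b₁ ⊗ b₂) = ε(b₁) = σ^j λ + σ^{2j} μ`.
In `p(j+1)`, `φ_i` of the left factor is `λ_{i+j} + μ_{i+2j+1}` and `ε_i` of the right factor is
`μ_{i+2j+1}`; adding `φ_i` of the right factor, `μ_{i+2j}`, to their difference gives
`λ_{i+j} + μ_{i+2j}` again, and this dominates `μ_{i+2j}`. The levels `l` and `m` are preserved
since sums over `Fin n` are invariant under cyclic shifts.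
-/

theorem Fintype.sum_comp_add_right {G M : Type*} [AddGroup G] [Fintype G] [AddCommMonoid M]
    (f : G → M) (c : G) : ∑ i, f (i + c) = ∑ i, f i :=
  Fintype.sum_equiv (Equiv.addRight c) _ _ fun _ => rfl

theorem Nat.max_add_tsub_eq_left {a b c : ℕ} (h : b ≤ c) : max a (a + b - c) = a := by
  omega

theorem Nat.max_add_add_tsub_eq (a b c : ℕ) : max b (a + c + b - c) = a + b := by
  omega

namespace prefA

variable {n : ℕ} [NeZero n] (lam mu : Fin n → ℕ) (j : ℕ) (i : Fin n)

theorem cast_two_mul_succ : ((2 * (j + 1) : ℕ) : Fin n) = ((2 * j : ℕ) : Fin n) + 1 + 1 := by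
  rw [Nat.mul_succ, Nat.cast_add, Nat.cast_ofNat, add_assoc, one_add_one_eq_two]

theorem sum_fst : ∑ i, (prefA n lam mu j).1 i = ∑ i, lam i + ∑ i, mu i := by
  simp only [prefA, Finset.sum_add_distrib, Fintype.sum_comp_add_right]

theorem sum_snd : ∑ i, (prefA n lam mu j).2 i = ∑ i, mu i := by
  simp only [prefA, add_sub_assoc, Fintype.sum_comp_add_right]

theorem snd_le_fst_sub_one : (prefA n lam mu j).2 i ≤ (prefA n lam mu j).1 (i - 1) := by
  simp only [prefA, sub_add_eq_add_sub]
  exact Nat.le_add_left _ _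

theorem succ_fst_sub_one :
    (prefA n lam mu (j + 1)).1 (i - 1) = lam (i + j) + mu (i + (2 * j : ℕ) + 1) := by
  simp only [prefA, cast_two_mul_succ, Nat.cast_succ]
  congr 2 <;> abel

theorem succ_snd_sub_one : (prefA n lam mu (j + 1)).2 (i - 1) = mu (i + (2 * j : ℕ)) := by
  simp only [prefA, cast_two_mul_succ]
  congr 1; abel

theorem succ_snd : (prefA n lam mu (j + 1)).2 i = mu (i + (2 * j : ℕ) + 1) := by
  simp only [prefA, cast_two_mul_succ]
  congr 1; abel

end prefA

/-- for `λ ∈ (P_cl^+)_{l−m}` and `μ ∈ (P_cl^+)_m`, the sequence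
`p^{(λ,μ)}` is a reference path in `B = B^{1,l}⊗B^{1,m}`: each `p^{(λ,μ)}(j)`
lies in `B` and is minimal, and
`φ(p^{(λ,μ)}(j+1)) = ε(p^{(λ,μ)}(j)) = σ^j λ + σ^{2j} μ`, i.e. componentwise
`λ_{i+j} + μ_{i+2j}` (the automorphism `σΛ_i = Λ_{i−1}` shifts indices).
Tensor product `ε_i(b1⊗b2) = max(ε_i(b1), ε_i(b1)+ε_i(b2)−φ_i(b1))` and
`φ_i(b1⊗b2) = max(φ_i(b2), φ_i(b1)+φ_i(b2)−ε_i(b2))`, with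
`ε_i((a)) = a_i`, `φ_i((a)) = a_{i−1}`. -/
theorem stmt17 (n l m : ℕ) [NeZero n] (hlm : m ≤ l)
    (lam mu : Fin n → ℕ)
    (hlam : (∑ i, lam i) = l - m) (hmu : (∑ i, mu i) = m) :
    ∀ (j : ℕ),
      -- p^{(λ,μ)}(j) ∈ B^{1,l}⊗B^{1,m}
      ((∑ i, (prefA n lam mu j).1 i) = l ∧ (∑ i, (prefA n lam mu j).2 i) = m) ∧
      ∀ (i : Fin n),
        -- minimality: φ_i of the left factor ≥ ε_i of the right factor
        ((prefA n lam mu j).2 i ≤ (prefA n lam mu j).1 (i - 1)) ∧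
        -- ε_i(p^{(λ,μ)}(j)) = (σ^j λ + σ^{2j} μ)_i
        (max ((prefA n lam mu j).1 i)
            ((prefA n lam mu j).1 i + (prefA n lam mu j).2 i
              - (prefA n lam mu j).1 (i - 1))
          = lam (i + (j : Fin n)) + mu (i + ((2 * j : ℕ) : Fin n))) ∧
        -- φ_i(p^{(λ,μ)}(j+1)) = (σ^j λ + σ^{2j} μ)_i
        (max ((prefA n lam mu (j + 1)).2 (i - 1))
            ((prefA n lam mu (j + 1)).1 (i - 1) + (prefA n lam mu (j + 1)).2 (i - 1)
              - (prefA n lam mu (j + 1)).2 i)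
          = lam (i + (j : Fin n)) + mu (i + ((2 * j : ℕ) : Fin n))) := by
  intro j
  refine ⟨⟨?_, ?_⟩, fun i => ⟨prefA.snd_le_fst_sub_one lam mu j i, ?_, ?_⟩⟩
  · rw [prefA.sum_fst, hlam, hmu]
    omega
  · rw [prefA.sum_snd, hmu]
  · exact Nat.max_add_tsub_eq_left (prefA.snd_le_fst_sub_one lam mu j i)
  · rw [prefA.succ_fst_sub_one, prefA.succ_snd_sub_one, prefA.succ_snd,
      Nat.max_add_add_tsub_eq]
end
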